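/- Define μ_r^t(x) recursively by μ_1^t(x) = (σ²/2)Φ_{1−t}(x), μ_2^t(x) = (σ⁴/2)∫_t^1 E[Φ_{1−s}(x − B_s)²] ds, and for i ≥ 3, μ_i^t(x) = ∑_{j=1}^{i−1} C(i,j) ∫_t^1 E[μ_j^s(x − B_s) μ_{i−j}^s(x − B_s)] ds. Then for all r ≥ 1, t ∈ [0,1], and x ∈ ℝ: 0 ≤ μ_r^t(x) ≤ r!(σ²/2)^r (1−t)^{r−1}, and x ↦ μ_r^t(x) is nondecreasing. -/

import Mathlib

/-!
Nonnegativity, a bound depending on `t` only, and monotonicity in `x` on `[0,1] × ℝ` (together with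
joint measurability, needed to integrate in `s`) are preserved by products, by the Gaussian average
`x ↦ E[f s (x - B_s)]`, by integration over `s ∈ [t,1]` and by nonnegative linear combinations, so
they pass along the recursion. The bounds propagate exactly: `C(i,j) j! (i-j)! = i!`,
`∫_t^1 (1-s)^(i-2) ds = (1-t)^(i-1)/(i-1)`, and the sum has `i - 1` terms.
-/

open MeasureTheory ProbabilityTheory

/-- Standard normal cumulative distribution function Φ. -/
noncomputable def Phi (x : ℝ) : ℝ := ((gaussianReal 0 1) (Set.Iic x)).toReal

open Set
open scoped Nat

lemma Phi_nonneg (x : ℝ) : 0 ≤ Phi x := ENNReal.toReal_nonneg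

lemma Phi_le_one (x : ℝ) : Phi x ≤ 1 := measureReal_le_one

lemma monotone_Phi : Monotone Phi := fun _ _ hab =>
  ENNReal.toReal_mono (measure_ne_top _ _) (measure_mono (Iic_subset_Iic.2 hab))

noncomputable def clampUnit (t : ℝ) : ℝ := projIcc 0 1 zero_le_one t

lemma clampUnit_mem (t : ℝ) : clampUnit t ∈ Icc (0 : ℝ) 1 := (projIcc 0 1 zero_le_one t).2

lemma clampUnit_of_mem {t : ℝ} (ht : t ∈ Icc (0 : ℝ) 1) : clampUnit t = t := by
  simp [clampUnit, projIcc_of_mem _ ht]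

@[fun_prop]
lemma measurable_clampUnit : Measurable clampUnit :=
  (continuous_subtype_val.comp continuous_projIcc).measurable

/-- `E[f s (x - B_s)]` for a standard Brownian motion `B`. -/
noncomputable def brownianExpect (f : ℝ → ℝ → ℝ) (s x : ℝ) : ℝ :=
  ∫ y, f s (x - y) ∂gaussianReal 0 s.toNNReal

/-- Nothing is known about `f t` for `t ∉ [0,1]`, hence joint measurability is asked of the
function with time clamped to `[0,1]`. -/
structure IsAdmissible (f : ℝ → ℝ → ℝ) (b : ℝ → ℝ) : Prop where
  nonneg : ∀ t ∈ Icc (0 : ℝ) 1, ∀ x, 0 ≤ f t x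
  le : ∀ t ∈ Icc (0 : ℝ) 1, ∀ x, f t x ≤ b t
  mono : ∀ t ∈ Icc (0 : ℝ) 1, Monotone (f t)
  measurable : Measurable fun p : ℝ × ℝ => f (clampUnit p.1) p.2

namespace IsAdmissible

variable {f g : ℝ → ℝ → ℝ} {b c : ℝ → ℝ}

lemma bound_nonneg (hf : IsAdmissible f b) {t : ℝ} (ht : t ∈ Icc (0 : ℝ) 1) : 0 ≤ b t :=
  (hf.nonneg t ht 0).trans (hf.le t ht 0)

lemma bound_mono (hf : IsAdmissible f b) (hbc : ∀ t ∈ Icc (0 : ℝ) 1, b t ≤ c t) :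
    IsAdmissible f c :=
  ⟨hf.nonneg, fun t ht x => (hf.le t ht x).trans (hbc t ht), hf.mono, hf.measurable⟩

lemma const_mul (hf : IsAdmissible f b) {a : ℝ} (ha : 0 ≤ a) :
    IsAdmissible (fun t x => a * f t x) (fun t => a * b t) where
  nonneg t ht x := mul_nonneg ha (hf.nonneg t ht x)
  le t ht x := mul_le_mul_of_nonneg_left (hf.le t ht x) ha
  mono t ht := (hf.mono t ht).const_mul ha
  measurable := hf.measurable.const_mul a

lemma mul (hf : IsAdmissible f b) (hg : IsAdmissible g c) :
    IsAdmissible (fun t x => f t x * g t x) (fun t => b t * c t) where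
  nonneg t ht x := mul_nonneg (hf.nonneg t ht x) (hg.nonneg t ht x)
  le t ht x := mul_le_mul (hf.le t ht x) (hg.le t ht x) (hg.nonneg t ht x) (hf.bound_nonneg ht)
  mono t ht := (hf.mono t ht).mul (hg.mono t ht) (hf.nonneg t ht) (hg.nonneg t ht)
  measurable := hf.measurable.mul hg.measurable

lemma sum {ι : Type*} (s : Finset ι) {f : ι → ℝ → ℝ → ℝ} {b : ι → ℝ → ℝ}
    (hf : ∀ i ∈ s, IsAdmissible (f i) (b i)) :
    IsAdmissible (fun t x => ∑ i ∈ s, f i t x) (fun t => ∑ i ∈ s, b i t) where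
  nonneg t ht x := Finset.sum_nonneg fun i hi => (hf i hi).nonneg t ht x
  le t ht x := Finset.sum_le_sum fun i hi => (hf i hi).le t ht x
  mono t ht _ _ hxy := Finset.sum_le_sum fun i hi => (hf i hi).mono t ht hxy
  measurable := Finset.measurable_sum s fun i hi => (hf i hi).measurable

lemma integrable_comp_sub (hf : IsAdmissible f b) {t : ℝ} (ht : t ∈ Icc (0 : ℝ) 1) (x : ℝ)
    (ν : Measure ℝ) [IsFiniteMeasure ν] : Integrable (fun y => f t (x - y)) ν := by
  refine Integrable.of_bound ?_ (b t) (ae_of_all _ fun y => ?_)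
  · exact ((hf.mono t ht).measurable.comp (measurable_const.sub measurable_id)).aestronglyMeasurable
  · rw [Real.norm_of_nonneg (hf.nonneg t ht _)]
    exact hf.le t ht _

lemma brownianExpect (hf : IsAdmissible f b) : IsAdmissible (brownianExpect f) b where
  nonneg t ht x := integral_nonneg fun y => hf.nonneg t ht _
  le t ht x := by
    calc _ ≤ ∫ _, b t ∂gaussianReal 0 t.toNNReal :=
          integral_mono (hf.integrable_comp_sub ht x _) (integrable_const _)
            fun y => hf.le t ht _
      _ = b t := by simp
  mono t ht x x' hxx' := integral_mono (hf.integrable_comp_sub ht x _)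
    (hf.integrable_comp_sub ht x' _) fun y => hf.mono t ht (sub_le_sub_right hxx' y)
  measurable := by
    let κ : Kernel (ℝ × ℝ) ℝ :=
      ⟨fun p => gaussianReal 0 (clampUnit p.1).toNNReal, by fun_prop⟩
    have : IsMarkovKernel κ := ⟨fun p => by dsimp [κ]; infer_instance⟩
    have hF : Measurable fun q : (ℝ × ℝ) × ℝ => f (clampUnit q.1.1) (q.1.2 - q.2) :=
      hf.measurable.comp (f := fun q : (ℝ × ℝ) × ℝ => (q.1.1, q.1.2 - q.2)) (by fun_prop)
    exact (hF.stronglyMeasurable.integral_kernel_prod_right' (κ := κ)).measurable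

lemma intervalIntegrable (hf : IsAdmissible f b) (hb : Continuous b) {t : ℝ}
    (ht : t ∈ Icc (0 : ℝ) 1) (x : ℝ) : IntervalIntegrable (fun s => f s x) volume t 1 := by
  have hsub : ∀ s ∈ uIoc t 1, s ∈ Icc (0 : ℝ) 1 := fun s hs => by
    rw [uIoc_of_le ht.2] at hs
    exact ⟨ht.1.trans hs.1.le, hs.2⟩
  refine (hb.intervalIntegrable t 1).mono_fun' ?_ ?_
  · have hmeas : Measurable fun s => f (clampUnit s) x :=
      hf.measurable.comp (f := fun s : ℝ => (s, x)) (by fun_prop)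
    refine hmeas.aestronglyMeasurable.congr ?_
    filter_upwards [ae_restrict_mem measurableSet_uIoc] with s hs
    rw [clampUnit_of_mem (hsub s hs)]
  · filter_upwards [ae_restrict_mem measurableSet_uIoc] with s hs
    rw [Real.norm_of_nonneg (hf.nonneg s (hsub s hs) x)]
    exact hf.le s (hsub s hs) x

lemma intervalIntegral (hf : IsAdmissible f b) (hb : Continuous b) :
    IsAdmissible (fun t x => ∫ s in t..1, f s x) (fun t => ∫ s in t..1, b s) where
  nonneg t ht x := intervalIntegral.integral_nonneg ht.2 fun s hs =>
    hf.nonneg s ⟨ht.1.trans hs.1, hs.2⟩ x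
  le t ht x := intervalIntegral.integral_mono_on ht.2 (hf.intervalIntegrable hb ht x)
    (hb.intervalIntegrable t 1) fun s hs => hf.le s ⟨ht.1.trans hs.1, hs.2⟩ x
  mono t ht x x' hxx' := intervalIntegral.integral_mono_on ht.2
    (hf.intervalIntegrable hb ht x) (hf.intervalIntegrable hb ht x') fun s hs =>
      hf.mono s ⟨ht.1.trans hs.1, hs.2⟩ hxx'
  measurable := by
    have hF : Measurable fun q : (ℝ × ℝ) × ℝ =>
        {q : (ℝ × ℝ) × ℝ | q.2 ∈ Ioc (clampUnit q.1.1) 1}.indicator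
          (fun q => f (clampUnit q.2) q.1.2) q := by
      refine (hf.measurable.comp (f := fun q : (ℝ × ℝ) × ℝ => (q.2, q.1.2))
        (by fun_prop)).indicator ?_
      exact (measurableSet_lt (by fun_prop) measurable_snd).inter
        (measurableSet_le measurable_snd measurable_const)
    convert (hF.stronglyMeasurable.integral_prod_right' (ν := volume)).measurable using 1
    funext p
    rw [intervalIntegral.integral_of_le (clampUnit_mem p.1).2,
      ← integral_indicator measurableSet_Ioc]
    refine integral_congr_ae (ae_of_all _ fun s => ?_)
    simp only [indicator_apply, mem_ofPred_eq]
    split_ifs with hs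
    · rw [clampUnit_of_mem ⟨(clampUnit_mem p.1).1.trans hs.1.le, hs.2⟩]
    · rfl

end IsAdmissible

lemma isAdmissible_Phi : IsAdmissible (fun t x => Phi (x / √(1 - t))) fun _ => 1 where
  nonneg _ _ _ := Phi_nonneg _
  le _ _ _ := Phi_le_one _
  mono _ _ _ _ hxx' := monotone_Phi (div_le_div_of_nonneg_right hxx' (Real.sqrt_nonneg _))
  measurable := monotone_Phi.measurable.comp (by fun_prop)

lemma integral_one_sub_pow (t : ℝ) (n : ℕ) :
    ∫ s in t..1, (1 - s) ^ n = (1 - t) ^ (n + 1) / (n + 1) := by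
  simp [intervalIntegral.integral_comp_sub_left (fun s => s ^ n) 1, integral_pow]

lemma choose_mul_integral_factorial_bound {c : ℝ} {i j : ℕ} (hj : j ∈ Finset.Ico 1 i) (t : ℝ) :
    (i.choose j : ℝ) * ∫ s in t..1, (j ! * c ^ j * (1 - s) ^ (j - 1)) *
        ((i - j)! * c ^ (i - j) * (1 - s) ^ (i - j - 1))
      = i ! * c ^ i * (1 - t) ^ (i - 1) / (i - 1 : ℕ) := by
  obtain ⟨a, b, rfl, rfl⟩ : ∃ a b, j = a + 1 ∧ i = a + 1 + (b + 1) := by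
    rw [Finset.mem_Ico] at hj
    exact ⟨j - 1, i - j - 1, by omega, by omega⟩
  have hfact : ((a + 1 + (b + 1)).choose (a + 1) : ℝ) * (a + 1)! * (b + 1)!
      = (a + 1 + (b + 1))! := by
    have := Nat.choose_mul_factorial_mul_factorial (Nat.le_add_right (a + 1) (b + 1))
    rw [Nat.add_sub_cancel_left] at this
    exact_mod_cast this
  have hintegrand : ∀ s : ℝ, ((a + 1)! * c ^ (a + 1) * (1 - s) ^ (a + 1 - 1)) *
      ((a + 1 + (b + 1) - (a + 1))! * c ^ (a + 1 + (b + 1) - (a + 1)) *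
        (1 - s) ^ (a + 1 + (b + 1) - (a + 1) - 1))
      = (a + 1)! * (b + 1)! * c ^ (a + 1 + (b + 1)) * (1 - s) ^ (a + b) := fun s => by
    simp only [Nat.add_sub_cancel_left, Nat.add_sub_cancel]
    ring
  simp only [hintegrand, intervalIntegral.integral_const_mul, integral_one_sub_pow,
    show a + 1 + (b + 1) - 1 = a + b + 1 by omega]
  rw [← hfact]
  push_cast
  ring

theorem isAdmissible_binomial_recursion {c : ℝ} {ν : ℕ → ℝ → ℝ → ℝ} {i : ℕ} (hi : 2 ≤ i)
    (hν : ∀ j, 1 ≤ j → j < i → IsAdmissible (ν j) fun t => j ! * c ^ j * (1 - t) ^ (j - 1)) :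
    IsAdmissible (fun t x => ∑ j ∈ Finset.Ico 1 i, (i.choose j : ℝ) *
        ∫ s in t..1, brownianExpect (fun s z => ν j s z * ν (i - j) s z) s x)
      fun t => i ! * c ^ i * (1 - t) ^ (i - 1) := by
  have hterm : ∀ j ∈ Finset.Ico 1 i, IsAdmissible
      (fun t x => (i.choose j : ℝ) *
        ∫ s in t..1, brownianExpect (fun s z => ν j s z * ν (i - j) s z) s x)
      fun t => (i.choose j : ℝ) * ∫ s in t..1, (j ! * c ^ j * (1 - s) ^ (j - 1)) *
        ((i - j)! * c ^ (i - j) * (1 - s) ^ (i - j - 1)) := fun j hj => by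
    rw [Finset.mem_Ico] at hj
    exact ((((hν j hj.1 hj.2).mul (hν (i - j) (by omega) (by omega))).brownianExpect
      ).intervalIntegral (by fun_prop)).const_mul (Nat.cast_nonneg _)
  refine (IsAdmissible.sum _ hterm).bound_mono fun t _ => le_of_eq ?_
  have hcard : ((i - 1 : ℕ) : ℝ) ≠ 0 := by norm_cast; omega
  rw [Finset.sum_congr rfl fun j hj => choose_mul_integral_factorial_bound hj t,
    Finset.sum_const, Nat.card_Ico, nsmul_eq_mul, mul_div_cancel₀ _ hcard]

theorem stmt11 (σ2 : ℝ) (hσ : 0 < σ2) (μ : ℕ → ℝ → ℝ → ℝ)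
    (h1 : ∀ t x : ℝ, μ 1 t x = σ2 / 2 * Phi (x / Real.sqrt (1 - t)))
    (h2 : ∀ t x : ℝ, μ 2 t x = σ2 ^ 2 / 2 * ∫ s in t..(1:ℝ),
      ∫ y, (Phi ((x - y) / Real.sqrt (1 - s))) ^ 2 ∂(gaussianReal 0 s.toNNReal))
    (hrec : ∀ i, 3 ≤ i → ∀ t x : ℝ, μ i t x = ∑ j ∈ Finset.Ico 1 i, (i.choose j : ℝ) *
      ∫ s in t..(1:ℝ), ∫ y, μ j s (x - y) * μ (i - j) s (x - y) ∂(gaussianReal 0 s.toNNReal)) :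
    ∀ r, 1 ≤ r → ∀ t ∈ Set.Icc (0:ℝ) 1,
      (∀ x, 0 ≤ μ r t x ∧
        μ r t x ≤ (r.factorial : ℝ) * (σ2 / 2) ^ r * (1 - t) ^ (r - 1)) ∧
      Monotone (μ r t) := by
  have hμ1 : μ 1 = fun t x => σ2 / 2 * Phi (x / √(1 - t)) := funext₂ h1
  -- The formula for `μ 2` is the case `i = 2` of the recursion.
  have hμ_rec : ∀ i, 2 ≤ i → μ i = fun t x => ∑ j ∈ Finset.Ico 1 i, (i.choose j : ℝ) *
      ∫ s in t..1, brownianExpect (fun s z => μ j s z * μ (i - j) s z) s x := by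
    intro i hi
    funext t x
    rcases hi.eq_or_lt with rfl | hi
    · simp only [h2, brownianExpect, h1, Nat.Ico_succ_singleton, Finset.sum_singleton]
      simp only [← sq, mul_pow, integral_const_mul, intervalIntegral.integral_const_mul]
      norm_num
      ring
    · exact hrec i hi t x
  have hadm : ∀ r, 1 ≤ r →
      IsAdmissible (μ r) fun t => r ! * (σ2 / 2) ^ r * (1 - t) ^ (r - 1) := by
    intro r
    induction r using Nat.strong_induction_on with
    | _ r ih =>
      intro hr
      rcases hr.eq_or_lt with rfl | hr
      · rw [hμ1]
        refine (isAdmissible_Phi.const_mul (by positivity)).bound_mono fun t _ => ?_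
        simp
      · rw [hμ_rec r hr]
        exact isAdmissible_binomial_recursion hr fun j hj hjr => ih j hjr hj
  intro r hr t ht
  exact ⟨fun x => ⟨(hadm r hr).nonneg t ht x, (hadm r hr).le t ht x⟩, (hadm r hr).mono t ht⟩
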